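/- For any two orthonormal pairs (v₁, v₂) and (w₁, w₂) of vectors in ℝ⁷ there exists a linear isometry g of ℝ⁷ satisfying φ(g x, g y, g z) = φ(x, y, z) for all x, y, z ∈ ℝ⁷, g v₁ = w₁ and g v₂ = w₂. (The stabilizer G₂ of φ acts transitively on orthonormal 2-frames, hence on the oriented Grassmannian of 2-planes in ℝ⁷.) -/

import Mathlib

/-!
Let `x × y` be the bilinear map on `ℝ⁷` with `⟪x × y, z⟫ = φ(x, y, z)`. It satisfies
`x × (x × y) = ⟪x, y⟫ x - ‖x‖² y`, and `x × (y × z) = -(x × y) × z` for pairwise orthogonal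
`x, y, z`. From these, an orthonormal pair `(a, b)` and any unit vector `d ⊥ a, b, a × b` generate
by cross products an orthonormal basis `F` of `ℝ⁷` obeying the octonion rule
`F i × F (i + 1) = F (i + 3)` (indices mod 7). Any two distinct indices lie on one of these seven
Fano lines, so all such frames have the same multiplication table: the isometry carrying the frame
of `(v₁, v₂)` to that of `(w₁, w₂)` preserves `×`, hence `φ`.
-/

noncomputable section

open scoped InnerProductSpace

/-- `3 × 3` determinant of coordinates `a, b, c` of `(x, y, z)`. -/
def det3 (a b c : Fin 7) (x y z : EuclideanSpace ℝ (Fin 7)) : ℝ :=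
  x a * (y b * z c - y c * z b) - x b * (y a * z c - y c * z a) +
    x c * (y a * z b - y b * z a)

/-- The associative calibration `φ` of Harvey–Lawson on `ℝ⁷`. -/
def phi (x y z : EuclideanSpace ℝ (Fin 7)) : ℝ :=
  det3 4 5 6 x y z - det3 4 0 1 x y z - det3 4 2 3 x y z -
    det3 5 0 2 x y z - det3 5 3 1 x y z - det3 6 0 3 x y z - det3 6 1 2 x y z

open Module

theorem exists_norm_eq_one_forall_inner_eq_zero {𝕜 E ι : Type*} [RCLike 𝕜]
    [NormedAddCommGroup E] [InnerProductSpace 𝕜 E] [FiniteDimensional 𝕜 E] [Fintype ι]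
    (v : ι → E) (h : Fintype.card ι < finrank 𝕜 E) :
    ∃ d : E, ‖d‖ = 1 ∧ ∀ i, ⟪v i, d⟫_𝕜 = 0 := by
  set K := Submodule.span 𝕜 (Set.range v)
  have hK : Kᗮ ≠ ⊥ := by
    intro hK
    have hsum := K.finrank_add_finrank_orthogonal
    have hle : finrank 𝕜 K ≤ Fintype.card ι := finrank_range_le_card v
    rw [hK, finrank_bot] at hsum
    omega
  obtain ⟨d, hdK, hd⟩ := Submodule.exists_mem_ne_zero_of_ne_bot hK
  refine ⟨(‖d‖⁻¹ : 𝕜) • d, norm_smul_inv_norm hd, fun i => ?_⟩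
  rw [inner_smul_right, Submodule.inner_right_of_mem_orthogonal
    (Submodule.subset_span (Set.mem_range_self i)) hdK, mul_zero]

theorem Orthonormal.exists_linearIsometryEquiv {𝕜 E ι : Type*} [RCLike 𝕜]
    [NormedAddCommGroup E] [InnerProductSpace 𝕜 E] [FiniteDimensional 𝕜 E] [Fintype ι]
    {v w : ι → E} (hv : Orthonormal 𝕜 v) (hw : Orthonormal 𝕜 w)
    (hcard : Fintype.card ι = finrank 𝕜 E) : ∃ g : E ≃ₗᵢ[𝕜] E, ∀ i, g (v i) = w i := by
  let bv := OrthonormalBasis.mk hv (hv.linearIndependent.span_eq_top_of_card_eq_finrank' hcard).ge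
  let bw := OrthonormalBasis.mk hw (hw.linearIndependent.span_eq_top_of_card_eq_finrank' hcard).ge
  refine ⟨bv.equiv bw (Equiv.refl ι), fun i => ?_⟩
  simpa [bv, bw] using bv.equiv_apply_basis bw (Equiv.refl ι) i

local notation "E7" => EuclideanSpace ℝ (Fin 7)

def cross7 : E7 →ₗ[ℝ] E7 →ₗ[ℝ] E7 :=
  LinearMap.mk₂ ℝ (fun x y => WithLp.toLp 2
    ![x 4 * y 1 - x 1 * y 4 + x 5 * y 2 - x 2 * y 5 + x 6 * y 3 - x 3 * y 6,
      x 0 * y 4 - x 4 * y 0 + x 3 * y 5 - x 5 * y 3 + x 6 * y 2 - x 2 * y 6,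
      x 4 * y 3 - x 3 * y 4 + x 0 * y 5 - x 5 * y 0 + x 1 * y 6 - x 6 * y 1,
      x 2 * y 4 - x 4 * y 2 + x 5 * y 1 - x 1 * y 5 + x 0 * y 6 - x 6 * y 0,
      x 5 * y 6 - x 6 * y 5 - x 0 * y 1 + x 1 * y 0 - x 2 * y 3 + x 3 * y 2,
      x 6 * y 4 - x 4 * y 6 - x 0 * y 2 + x 2 * y 0 + x 1 * y 3 - x 3 * y 1,
      x 4 * y 5 - x 5 * y 4 - x 0 * y 3 + x 3 * y 0 - x 1 * y 2 + x 2 * y 1])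
    (fun _ _ _ => by ext i; fin_cases i <;> simp <;> ring)
    (fun _ _ _ => by ext i; fin_cases i <;> simp <;> ring)
    (fun _ _ _ => by ext i; fin_cases i <;> simp <;> ring)
    (fun _ _ _ => by ext i; fin_cases i <;> simp <;> ring)

section Identities

variable (x y z : E7)

theorem inner_cross7 : ⟪cross7 x y, z⟫_ℝ = phi x y z := by
  simp [PiLp.inner_apply, Fin.sum_univ_seven, cross7, phi, det3]
  ring

theorem cross7_anticomm : -cross7 x y = cross7 y x := by
  ext i; fin_cases i <;> simp [cross7] <;> ring

theorem cross7_self : cross7 x x = 0 := by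
  ext i; fin_cases i <;> simp [cross7] <;> ring

theorem inner_cross7_right : ⟪cross7 x y, y⟫_ℝ = 0 := by
  simp [PiLp.inner_apply, Fin.sum_univ_seven, cross7]
  ring

theorem inner_cross7_cross7 :
    ⟪cross7 x y, cross7 x z⟫_ℝ = ⟪x, x⟫_ℝ * ⟪y, z⟫_ℝ - ⟪x, y⟫_ℝ * ⟪x, z⟫_ℝ := by
  simp only [PiLp.inner_apply, RCLike.inner_apply, conj_trivial, Fin.sum_univ_seven]
  simp [cross7]
  ring

theorem cross7_cross7_add_cross7_cross7 :
    cross7 x (cross7 y z) + cross7 (cross7 x y) z =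
      (2 * ⟪x, z⟫_ℝ) • y - ⟪y, z⟫_ℝ • x - ⟪x, y⟫_ℝ • z := by
  ext i
  simp only [PiLp.add_apply, PiLp.sub_apply, PiLp.smul_apply, smul_eq_mul, PiLp.inner_apply,
    RCLike.inner_apply, conj_trivial, Fin.sum_univ_seven]
  fin_cases i <;> simp [cross7] <;> ring

theorem cross7_cross7_self : cross7 x (cross7 x y) = ⟪x, y⟫_ℝ • x - ⟪x, x⟫_ℝ • y := by
  have h := cross7_cross7_add_cross7_cross7 x x y
  rw [cross7_self, map_zero, LinearMap.zero_apply, add_zero] at h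
  rw [h]
  module

theorem norm_cross7_sq : ‖cross7 x y‖ ^ 2 = ‖x‖ ^ 2 * ‖y‖ ^ 2 - ⟪x, y⟫_ℝ ^ 2 := by
  simp only [← real_inner_self_eq_norm_sq, inner_cross7_cross7]
  ring

end Identities

theorem cross7_cross7_of_inner_eq_zero {x y z : E7} (hxy : ⟪x, y⟫_ℝ = 0) (hyz : ⟪y, z⟫_ℝ = 0)
    (hxz : ⟪x, z⟫_ℝ = 0) : cross7 x (cross7 y z) = -cross7 (cross7 x y) z := by
  have h := cross7_cross7_add_cross7_cross7 x y z
  rw [hxy, hyz, hxz, mul_zero, zero_smul, zero_smul, zero_smul, sub_zero, sub_zero] at h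
  exact eq_neg_of_add_eq_zero_left h

/-- An orthonormal pair with its cross product: a basis of an associative 3-plane. -/
structure IsAssociativeTriple (x y z : E7) : Prop where
  norm_fst : ‖x‖ = 1
  norm_snd : ‖y‖ = 1
  inner_eq_zero : ⟪x, y⟫_ℝ = 0
  cross7_eq : cross7 x y = z

namespace IsAssociativeTriple

variable {x y z u v : E7}

theorem rotate (h : IsAssociativeTriple x y z) : IsAssociativeTriple y z x where
  norm_fst := h.norm_snd
  norm_snd := by
    rw [← pow_eq_one_iff_of_nonneg (norm_nonneg _) two_ne_zero, ← h.cross7_eq, norm_cross7_sq,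
      h.norm_fst, h.norm_snd, h.inner_eq_zero]
    norm_num
  inner_eq_zero := by rw [← h.cross7_eq, real_inner_comm, inner_cross7_right]
  cross7_eq := by
    rw [← h.cross7_eq, ← cross7_anticomm y x, map_neg, cross7_cross7_self, real_inner_comm,
      h.inner_eq_zero, real_inner_self_eq_norm_sq, h.norm_snd]
    simp

theorem cross7_cross7 (hxy : IsAssociativeTriple x y u) (hyz : IsAssociativeTriple y z v)
    (hxz : ⟪x, z⟫_ℝ = 0) (huz : ⟪u, z⟫_ℝ = 0) : IsAssociativeTriple u v (cross7 x z) where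
  norm_fst := hxy.rotate.norm_snd
  norm_snd := hyz.rotate.norm_snd
  inner_eq_zero := by
    rw [← hxy.cross7_eq, ← hyz.cross7_eq, ← cross7_anticomm, inner_neg_left,
      inner_cross7_cross7, hxz, hyz.inner_eq_zero]
    ring
  cross7_eq := by
    have huy : ⟪u, y⟫_ℝ = 0 := by rw [real_inner_comm]; exact hxy.rotate.inner_eq_zero
    rw [← hyz.cross7_eq, cross7_cross7_of_inner_eq_zero huy hyz.inner_eq_zero huz,
      ← cross7_anticomm y, hxy.rotate.cross7_eq, map_neg, LinearMap.neg_apply, neg_neg]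

end IsAssociativeTriple

/-- The octonion multiplication rule `eᵢ eᵢ₊₁ = eᵢ₊₃`, indices mod 7. -/
def IsCayleyFrame (F : Fin 7 → E7) : Prop :=
  ∀ i, IsAssociativeTriple (F i) (F (i + 1)) (F (i + 3))

/-- `(i, j, k)` is a cyclic rotation of a line `(m, m + 1, m + 3)` of the Fano plane. -/
def IsFanoTriple (i j k : Fin 7) : Prop :=
  j = i + 1 ∧ k = i + 3 ∨ j = i + 2 ∧ k = i + 6 ∨ j = i + 4 ∧ k = i + 5

theorem exists_isFanoTriple {i j : Fin 7} (h : i ≠ j) :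
    ∃ k, IsFanoTriple i j k ∨ IsFanoTriple j i k := by
  unfold IsFanoTriple
  revert i j
  decide

namespace IsCayleyFrame

variable {F F' : Fin 7 → E7}

theorem isAssociativeTriple (hF : IsCayleyFrame F) {i j k : Fin 7} (h : IsFanoTriple i j k) :
    IsAssociativeTriple (F i) (F j) (F k) := by
  rcases h with ⟨rfl, rfl⟩ | ⟨rfl, rfl⟩ | ⟨rfl, rfl⟩
  · exact hF i
  · simpa only [add_assoc, Fin.reduceAdd, add_zero] using (hF (i + 6)).rotate
  · simpa only [add_assoc, Fin.reduceAdd, add_zero] using (hF (i + 4)).rotate.rotate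

theorem orthonormal (hF : IsCayleyFrame F) : Orthonormal ℝ F := by
  refine ⟨fun i => (hF i).norm_fst, fun i j hij => ?_⟩
  obtain ⟨k, h | h⟩ := exists_isFanoTriple hij
  · exact (hF.isAssociativeTriple h).inner_eq_zero
  · rw [real_inner_comm]
    exact (hF.isAssociativeTriple h).inner_eq_zero

theorem map_cross7 (hF : IsCayleyFrame F) (hF' : IsCayleyFrame F') (g : E7 →ₗ[ℝ] E7)
    (hg : ∀ i, g (F i) = F' i) (x y : E7) : g (cross7 x y) = cross7 (g x) (g y) := by
  let b := basisOfOrthonormalOfCardEqFinrank hF.orthonormal (by simp)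
  have hb : ⇑b = F := coe_basisOfOrthonormalOfCardEqFinrank _ _
  suffices cross7.compr₂ g = cross7.compl₁₂ g g from LinearMap.congr_fun₂ this x y
  refine LinearMap.ext_basis b b fun i j => ?_
  simp only [LinearMap.compr₂_apply, LinearMap.compl₁₂_apply, hb, hg]
  rcases eq_or_ne i j with rfl | hij
  · simp [cross7_self]
  obtain ⟨k, h | h⟩ := exists_isFanoTriple hij
  · rw [(hF.isAssociativeTriple h).cross7_eq, (hF'.isAssociativeTriple h).cross7_eq, hg]
  · rw [← cross7_anticomm, (hF.isAssociativeTriple h).cross7_eq, ← cross7_anticomm,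
      (hF'.isAssociativeTriple h).cross7_eq, map_neg, hg]

end IsCayleyFrame

theorem exists_isCayleyFrame {a b : E7} (ha : ‖a‖ = 1) (hb : ‖b‖ = 1) (hab : ⟪a, b⟫_ℝ = 0) :
    ∃ F, IsCayleyFrame F ∧ F 0 = a ∧ F 1 = b := by
  obtain ⟨d, hd, hd_orth⟩ :=
    exists_norm_eq_one_forall_inner_eq_zero (𝕜 := ℝ) ![a, b, cross7 a b] (by simp)
  -- `tijk` is the line `(F i, F j, F k)` of the frame `F` below
  have t013 : IsAssociativeTriple a b (cross7 a b) := ⟨ha, hb, hab, rfl⟩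
  have t124 : IsAssociativeTriple b d (cross7 b d) := ⟨hb, hd, hd_orth 1, rfl⟩
  have t026 : IsAssociativeTriple a d (cross7 a d) := ⟨ha, hd, hd_orth 0, rfl⟩
  have t235 : IsAssociativeTriple d (cross7 a b) (cross7 d (cross7 a b)) :=
    ⟨hd, t013.rotate.norm_snd, by rw [real_inner_comm]; exact hd_orth 2, rfl⟩
  have t346 := t013.cross7_cross7 t124 (hd_orth 0) (hd_orth 2)
  have t450 := t124.cross7_cross7 t235 t013.rotate.inner_eq_zero
    (by rw [real_inner_comm]; exact t346.inner_eq_zero)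
  rw [t013.rotate.cross7_eq] at t450
  have t561 := t235.cross7_cross7 t346 t124.rotate.inner_eq_zero
    (by rw [real_inner_comm]; exact t450.inner_eq_zero)
  rw [t124.rotate.cross7_eq] at t561
  refine ⟨![a, b, d, cross7 a b, cross7 b d, cross7 d (cross7 a b), cross7 a d], ?_, rfl, rfl⟩
  intro i
  fin_cases i
  exacts [t013, t124, t235, t346, t450, t561, t026.rotate.rotate]

theorem phi_map_of_map_cross7 (g : E7 ≃ₗᵢ[ℝ] E7) (hg : ∀ x y, g (cross7 x y) = cross7 (g x) (g y))
    (x y z : E7) : phi (g x) (g y) (g z) = phi x y z := by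
  rw [← inner_cross7, ← hg, g.inner_map_map, inner_cross7]

/-- The stabilizer `G₂` of `φ` acts transitively on orthonormal 2-frames in
`ℝ⁷` (hence on the oriented Grassmannian of 2-planes): for any orthonormal
pairs `(v₁, v₂)` and `(w₁, w₂)` there is a linear isometry of `ℝ⁷`
preserving `φ` carrying `v₁` to `w₁` and `v₂` to `w₂`. -/
theorem G2_transitive_on_2frames (v₁ v₂ w₁ w₂ : EuclideanSpace ℝ (Fin 7))
    (hv₁ : ‖v₁‖ = 1) (hv₂ : ‖v₂‖ = 1) (hv : ⟪v₁, v₂⟫_ℝ = 0)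
    (hw₁ : ‖w₁‖ = 1) (hw₂ : ‖w₂‖ = 1) (hw : ⟪w₁, w₂⟫_ℝ = 0) :
    ∃ g : EuclideanSpace ℝ (Fin 7) ≃ₗᵢ[ℝ] EuclideanSpace ℝ (Fin 7),
      (∀ x y z, phi (g x) (g y) (g z) = phi x y z) ∧ g v₁ = w₁ ∧ g v₂ = w₂ := by
  obtain ⟨F, hF, rfl, rfl⟩ := exists_isCayleyFrame hv₁ hv₂ hv
  obtain ⟨F', hF', rfl, rfl⟩ := exists_isCayleyFrame hw₁ hw₂ hw
  obtain ⟨g, hg⟩ := hF.orthonormal.exists_linearIsometryEquiv hF'.orthonormal (by simp)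
  exact ⟨g, phi_map_of_map_cross7 g (hF.map_cross7 hF' g.toLinearMap hg), hg 0, hg 1⟩
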